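/- arXiv:2412.02020 — 11 statements merged into one kernel-verified Lean document; each statement's English description precedes it below -/
import Mathlib

section
/- For finite hypernetworks, weak isomorphism admits an exact characterization: if H=(X,Y,ω) and H'=(X',Y',ω') have finite underlying sets and are weakly isomorphic, then there exist sets W, Z with surjections φ:W→X, φ':W→X', ψ:Z→Y, ψ':Z→Y' such that ω(φ(w),ψ(z)) = ω'(φ'(w),ψ'(z)) for all w∈W, z∈Z. -/
open Set

universe u

/-- A correspondence between two sets (types): a relation with surjective projections. -/
def IsCorr {α : Type*} {β : Type*} (R : Set (α × β)) : Prop :=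
  (∀ a, ∃ b, (a, b) ∈ R) ∧ (∀ b, ∃ a, (a, b) ∈ R)

/-- Hypernetwork Gromov-Hausdorff distance. -/
noncomputable def dH {X Y X' Y' : Type*} (ω : X → Y → ℝ) (ω' : X' → Y' → ℝ) : ℝ :=
  (1/2) * sInf {ε : ℝ | 0 ≤ ε ∧ ∃ S : Set (X × X'), ∃ T : Set (Y × Y'),
    IsCorr S ∧ IsCorr T ∧ ∀ p ∈ S, ∀ q ∈ T, |ω p.1 q.1 - ω' p.2 q.2| ≤ ε}

/-- Network Gromov-Hausdorff distance. -/
noncomputable def dN {X X' : Type*} (ω : X → X → ℝ) (ω' : X' → X' → ℝ) : ℝ :=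
  (1/2) * sInf {ε : ℝ | 0 ≤ ε ∧ ∃ R : Set (X × X'), IsCorr R ∧
    ∀ p ∈ R, ∀ q ∈ R, |ω p.1 q.1 - ω' p.2 q.2| ≤ ε}

/-- Weak isomorphism of hypernetworks. -/
def WeakIso {X Y X' Y' : Type u} (ω : X → Y → ℝ) (ω' : X' → Y' → ℝ) : Prop :=
  ∀ ε : ℝ, 0 < ε → ∃ (W Z : Type u) (φ : W → X) (φ' : W → X') (ψ : Z → Y) (ψ' : Z → Y'),
    Function.Surjective φ ∧ Function.Surjective φ' ∧
    Function.Surjective ψ ∧ Function.Surjective ψ' ∧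
    ∀ w z, |ω (φ w) (ψ z) - ω' (φ' w) (ψ' z)| < ε

/-- For finite hypernetworks, weak isomorphism gives an exact (ε = 0) matching. -/
theorem weakIso_finite_exact {X Y X' Y' : Type u}
    [Finite X] [Finite Y] [Finite X'] [Finite Y']
    (ω : X → Y → ℝ) (ω' : X' → Y' → ℝ) (h : WeakIso ω ω') :
    ∃ (W Z : Type u) (φ : W → X) (φ' : W → X') (ψ : Z → Y) (ψ' : Z → Y'),
      Function.Surjective φ ∧ Function.Surjective φ' ∧
      Function.Surjective ψ ∧ Function.Surjective ψ' ∧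
      ∀ w z, ω (φ w) (ψ z) = ω' (φ' w) (ψ' z) := by
  -- For each n, extract correspondences with error < 1/(n+1).
  have key : ∀ n : ℕ, ∃ ST : Set (X × X') × Set (Y × Y'),
      IsCorr ST.1 ∧ IsCorr ST.2 ∧
      ∀ p ∈ ST.1, ∀ q ∈ ST.2, |ω p.1 q.1 - ω' p.2 q.2| < 1 / (n + 1) := by
    intro n
    have hpos : (0 : ℝ) < 1 / (n + 1) := by positivity
    obtain ⟨W, Z, φ, φ', ψ, ψ', hφ, hφ', hψ, hψ', hb⟩ := h _ hpos
    refine ⟨(Set.range (fun w => (φ w, φ' w)), Set.range (fun z => (ψ z, ψ' z))), ?_, ?_, ?_⟩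
    · constructor
      · intro a
        obtain ⟨w, hw⟩ := hφ a
        exact ⟨φ' w, ⟨w, by simp [hw]⟩⟩
      · intro b
        obtain ⟨w, hw⟩ := hφ' b
        exact ⟨φ w, ⟨w, by simp [hw]⟩⟩
    · constructor
      · intro a
        obtain ⟨z, hz⟩ := hψ a
        exact ⟨ψ' z, ⟨z, by simp [hz]⟩⟩
      · intro b
        obtain ⟨z, hz⟩ := hψ' b
        exact ⟨ψ z, ⟨z, by simp [hz]⟩⟩
    · rintro p ⟨w, rfl⟩ q ⟨z, rfl⟩
      exact hb w z
  choose f hf1 hf2 hf3 using key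
  -- Pigeonhole: some pair (S,T) occurs for infinitely many n.
  obtain ⟨ST, hST⟩ := Finite.exists_infinite_fiber f
  have hinf : {n | f n = ST}.Infinite := by
    rw [← Set.infinite_coe_iff]
    exact hST
  obtain ⟨n0, hn0⟩ := hinf.nonempty
  -- The bound holds for every ε > 0 on S,T, hence equality.
  have hexact : ∀ p ∈ ST.1, ∀ q ∈ ST.2, ω p.1 q.1 = ω' p.2 q.2 := by
    intro p hp q hq
    have habs : |ω p.1 q.1 - ω' p.2 q.2| ≤ 0 := by
      by_contra hc
      push_neg at hc
      obtain ⟨m, hm⟩ := exists_nat_one_div_lt hc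
      obtain ⟨k, hk, hmk⟩ := hinf.exists_gt m
      have h1 : |ω p.1 q.1 - ω' p.2 q.2| < 1 / (k + 1) := by
        have := hf3 k
        rw [hk] at this
        exact this p hp q hq
      have h2 : (1 : ℝ) / (k + 1) ≤ 1 / (m + 1) := by
        apply one_div_le_one_div_of_le
        · positivity
        · exact_mod_cast Nat.succ_le_succ hmk.le
      linarith
    have := abs_nonneg (ω p.1 q.1 - ω' p.2 q.2)
    have : ω p.1 q.1 - ω' p.2 q.2 = 0 := abs_eq_zero.mp (le_antisymm habs this)
    linarith
  have hC1 : IsCorr ST.1 := by have := hf1 n0; rwa [hn0] at this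
  have hC2 : IsCorr ST.2 := by have := hf2 n0; rwa [hn0] at this
  refine ⟨ST.1, ST.2, fun p => p.1.1, fun p => p.1.2, fun q => q.1.1, fun q => q.1.2,
    ?_, ?_, ?_, ?_, ?_⟩
  · intro a; obtain ⟨b, hb⟩ := hC1.1 a; exact ⟨⟨(a, b), hb⟩, rfl⟩
  · intro b; obtain ⟨a, ha⟩ := hC1.2 b; exact ⟨⟨(a, b), ha⟩, rfl⟩
  · intro a; obtain ⟨b, hb⟩ := hC2.1 a; exact ⟨⟨(a, b), hb⟩, rfl⟩
  · intro b; obtain ⟨a, ha⟩ := hC2.2 b; exact ⟨⟨(a, b), ha⟩, rfl⟩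
  · rintro ⟨p, hp⟩ ⟨q, hq⟩
    exact hexact p hp q hq
end

section
/- The hypernetwork distance and the mapping formulation coincide: d_H(H,H') = (1/2) inf over maps φ:X→X', ψ:Y→Y', φ':X'→X, ψ':Y'→Y of max{dis(φ,ψ), dis(φ',ψ'), codis(φ,ψ'), codis(φ',ψ)}. -/
open Set

universe u

/-- Mapping formulation of the hypernetwork Gromov-Hausdorff distance. -/
noncomputable def dHmap {X Y X' Y' : Type*} (ω : X → Y → ℝ) (ω' : X' → Y' → ℝ) : ℝ :=
  (1/2) * sInf {ε : ℝ | 0 ≤ ε ∧ ∃ (φ : X → X') (ψ : Y → Y') (φ' : X' → X) (ψ' : Y' → Y),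
    (∀ x y, |ω x y - ω' (φ x) (ψ y)| ≤ ε) ∧
    (∀ x' y', |ω (φ' x') (ψ' y') - ω' x' y'| ≤ ε) ∧
    (∀ x y', |ω x (ψ' y') - ω' (φ x) y'| ≤ ε) ∧
    (∀ x' y, |ω (φ' x') y - ω' x' (ψ y)| ≤ ε)}

/-- The hypernetwork distance coincides with its mapping formulation. -/
theorem dH_eq_dHmap {X Y X' Y' : Type u}
    [Nonempty X] [Nonempty Y] [Nonempty X'] [Nonempty Y']
    (ω : X → Y → ℝ) (ω' : X' → Y' → ℝ) :
    dH ω ω' = dHmap ω ω' := by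
  unfold dH dHmap
  congr 2
  ext ε
  constructor
  · rintro ⟨hε, S, T, hS, hT, h⟩
    refine ⟨hε, fun x => (hS.1 x).choose, fun y => (hT.1 y).choose,
      fun x' => (hS.2 x').choose, fun y' => (hT.2 y').choose, ?_, ?_, ?_, ?_⟩
    · intro x y
      exact h _ (hS.1 x).choose_spec _ (hT.1 y).choose_spec
    · intro x' y'
      exact h _ (hS.2 x').choose_spec _ (hT.2 y').choose_spec
    · intro x y'
      exact h _ (hS.1 x).choose_spec _ (hT.2 y').choose_spec
    · intro x' y
      exact h _ (hS.2 x').choose_spec _ (hT.1 y).choose_spec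
  · rintro ⟨hε, φ, ψ, φ', ψ', h1, h2, h3, h4⟩
    refine ⟨hε, {p : X × X' | p.2 = φ p.1} ∪ {p : X × X' | p.1 = φ' p.2},
      {q : Y × Y' | q.2 = ψ q.1} ∪ {q : Y × Y' | q.1 = ψ' q.2},
      ⟨fun x => ⟨φ x, Or.inl rfl⟩, fun x' => ⟨φ' x', Or.inr rfl⟩⟩,
      ⟨fun y => ⟨ψ y, Or.inl rfl⟩, fun y' => ⟨ψ' y', Or.inr rfl⟩⟩, ?_⟩
    rintro ⟨x, x'⟩ (hp | hp) ⟨y, y'⟩ (hq | hq) <;> simp only [Set.mem_setOf_eq] at hp hq <;>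
      subst hp <;> subst hq
    · exact h1 x y
    · exact h3 x y'
    · exact h4 x' y
    · exact h2 x' y'
end

section
/- The bipartite graphification is distance-preserving: for finite hypernetworks H and H', d_H(H,H') equals the labeled bipartite network distance d_B(B(H), B(H')). -/
open Set

universe u

/-- The bipartite graphification of a hypernetwork function. -/
def bip {X Y : Type*} (ω : X → Y → ℝ) : (X ⊕ Y) → (X ⊕ Y) → ℝ
  | Sum.inl x, Sum.inr y => ω x y
  | Sum.inr y, Sum.inl x => ω x y
  | _, _ => 0

/-- A labeled correspondence between labeled bipartite networks. -/
def IsLabeledCorr {X Y X' Y' : Type*} (R : Set ((X ⊕ Y) × (X' ⊕ Y'))) : Prop :=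
  IsCorr R ∧ ∀ p ∈ R, p.1.isLeft = p.2.isLeft

/-- The labeled bipartite network distance. -/
noncomputable def dB {X Y X' Y' : Type*} (ω : (X ⊕ Y) → (X ⊕ Y) → ℝ)
    (ω' : (X' ⊕ Y') → (X' ⊕ Y') → ℝ) : ℝ :=
  (1/2) * sInf {ε : ℝ | 0 ≤ ε ∧ ∃ R : Set ((X ⊕ Y) × (X' ⊕ Y')), IsLabeledCorr R ∧
    ∀ p ∈ R, ∀ q ∈ R, |ω p.1 q.1 - ω' p.2 q.2| ≤ ε}

/-- The bipartite graphification is distance preserving. -/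
theorem dH_eq_dB {X Y X' Y' : Type u}
    [Finite X] [Finite Y] [Finite X'] [Finite Y']
    [Nonempty X] [Nonempty Y] [Nonempty X'] [Nonempty Y']
    (ω : X → Y → ℝ) (ω' : X' → Y' → ℝ) :
    dH ω ω' = dB (bip ω) (bip ω') := by
  unfold dH dB
  refine congrArg (fun s => (1/2 : ℝ) * sInf s) ?_
  ext ε
  simp only [Set.mem_setOf_eq]
  constructor
  · rintro ⟨hε, S, T, hS, hT, hd⟩
    refine ⟨hε, {p | (∃ x x', p = (Sum.inl x, Sum.inl x') ∧ (x, x') ∈ S) ∨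
      (∃ y y', p = (Sum.inr y, Sum.inr y') ∧ (y, y') ∈ T)}, ⟨⟨?_, ?_⟩, ?_⟩, ?_⟩
    · rintro (x | y)
      · obtain ⟨x', hx⟩ := hS.1 x
        exact ⟨Sum.inl x', Or.inl ⟨x, x', rfl, hx⟩⟩
      · obtain ⟨y', hy⟩ := hT.1 y
        exact ⟨Sum.inr y', Or.inr ⟨y, y', rfl, hy⟩⟩
    · rintro (x' | y')
      · obtain ⟨x, hx⟩ := hS.2 x'
        exact ⟨Sum.inl x, Or.inl ⟨x, x', rfl, hx⟩⟩
      · obtain ⟨y, hy⟩ := hT.2 y'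
        exact ⟨Sum.inr y, Or.inr ⟨y, y', rfl, hy⟩⟩
    · rintro p (⟨x, x', rfl, _⟩ | ⟨y, y', rfl, _⟩) <;> rfl
    · rintro p (⟨x, x', rfl, hx⟩ | ⟨y, y', rfl, hy⟩) q
        (⟨a, a', rfl, ha⟩ | ⟨b, b', rfl, hb⟩)
      · simpa [bip] using hε
      · exact hd _ hx _ hb
      · exact hd _ ha _ hy
      · simpa [bip] using hε
  · rintro ⟨hε, R, ⟨⟨h1, h2⟩, hlab⟩, hd⟩
    refine ⟨hε, {p | (Sum.inl p.1, Sum.inl p.2) ∈ R},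
      {p | (Sum.inr p.1, Sum.inr p.2) ∈ R}, ⟨?_, ?_⟩, ⟨?_, ?_⟩, ?_⟩
    · intro x
      obtain ⟨b, hb⟩ := h1 (Sum.inl x)
      have := hlab _ hb
      cases b with
      | inl x' => exact ⟨x', hb⟩
      | inr y' => simp at this
    · intro x'
      obtain ⟨a, ha⟩ := h2 (Sum.inl x')
      have := hlab _ ha
      cases a with
      | inl x => exact ⟨x, ha⟩
      | inr y => simp at this
    · intro y
      obtain ⟨b, hb⟩ := h1 (Sum.inr y)
      have := hlab _ hb
      cases b with
      | inl x' => simp at this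
      | inr y' => exact ⟨y', hb⟩
    · intro y'
      obtain ⟨a, ha⟩ := h2 (Sum.inr y')
      have := hlab _ ha
      cases a with
      | inl x => simp at this
      | inr y => exact ⟨y, ha⟩
    · intro p hp q hq
      exact hd _ hp _ hq
end

section
/- The node-affinity graph map respects weak isomorphism: if finite hypernetworks H and H' satisfy d_H(H,H')=0, then their node-affinity networks satisfy d_N(A_n(H), A_n(H'))=0. -/
open Set

universe u

/-- The energy of a node-chain given by nodes `xs` and hyperedges `ys`. -/
noncomputable def chainEnergy {X Y : Type*} (ω : X → Y → ℝ) (k : ℕ)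
    (xs : Fin (k + 2) → X) (ys : Fin (k + 1) → Y) : ℝ :=
  ⨅ i : Fin (k + 1), min |ω (xs i.castSucc) (ys i)| |ω (xs i.succ) (ys i)|

/-- The node affinity: maximal energy over node-chains from `x` to `x'`. -/
noncomputable def affinity {X Y : Type*} (ω : X → Y → ℝ) (x x' : X) : ℝ :=
  sSup {e : ℝ | ∃ (k : ℕ) (xs : Fin (k + 2) → X) (ys : Fin (k + 1) → Y),
    xs 0 = x ∧ xs (Fin.last (k + 1)) = x' ∧ chainEnergy ω k xs ys = e}

lemma affinity_set_nonempty {X Y : Type*} [Nonempty Y] (ω : X → Y → ℝ) (x x' : X) :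
    {e : ℝ | ∃ (k : ℕ) (xs : Fin (k + 2) → X) (ys : Fin (k + 1) → Y),
      xs 0 = x ∧ xs (Fin.last (k + 1)) = x' ∧ chainEnergy ω k xs ys = e}.Nonempty := by
  classical
  refine ⟨_, 0, (fun i => if i = 0 then x else x'), (fun _ => Classical.arbitrary Y), ?_, ?_, rfl⟩
  · simp
  · simp [Fin.ext_iff]

lemma affinity_set_bddAbove {X Y : Type*} [Finite X] [Finite Y] [Nonempty X] [Nonempty Y]
    (ω : X → Y → ℝ) (x x' : X) :
    BddAbove {e : ℝ | ∃ (k : ℕ) (xs : Fin (k + 2) → X) (ys : Fin (k + 1) → Y),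
      xs 0 = x ∧ xs (Fin.last (k + 1)) = x' ∧ chainEnergy ω k xs ys = e} := by
  refine ⟨⨆ p : X × Y, |ω p.1 p.2|, ?_⟩
  rintro e ⟨k, xs, ys, h0, hl, rfl⟩
  have h1 := ciInf_le (f := fun i : Fin (k + 1) =>
      min |ω (xs i.castSucc) (ys i)| |ω (xs i.succ) (ys i)|)
    (Set.Finite.bddBelow (Set.finite_range _)) 0
  refine h1.trans ((min_le_left _ _).trans ?_)
  exact le_ciSup (f := fun p : X × Y => |ω p.1 p.2|)
    (Set.Finite.bddAbove (Set.finite_range _)) (xs (Fin.castSucc 0), ys 0)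

lemma affinity_le_of_corr {X Y X' Y' : Type*} [Finite X'] [Finite Y']
    [Nonempty X'] [Nonempty Y'] [Nonempty Y]
    (ω : X → Y → ℝ) (ω' : X' → Y' → ℝ) {ε : ℝ}
    {S : Set (X × X')} {T : Set (Y × Y')} (hS : IsCorr S) (hT : IsCorr T)
    (hd : ∀ p ∈ S, ∀ q ∈ T, |ω p.1 q.1 - ω' p.2 q.2| ≤ ε)
    {x z : X} {x' z' : X'} (hx : (x, x') ∈ S) (hz : (z, z') ∈ S) :
    affinity ω x z ≤ affinity ω' x' z' + ε := by
  classical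
  refine csSup_le (affinity_set_nonempty ω x z) ?_
  rintro e ⟨k, xs, ys, h0, hl, rfl⟩
  choose f hf using hS.1
  choose g hg using hT.1
  set xs' : Fin (k + 2) → X' := fun i =>
    if i = 0 then x' else if i = Fin.last (k + 1) then z' else f (xs i) with hxs'
  set ys' : Fin (k + 1) → Y' := fun i => g (ys i) with hys'
  have hmem : ∀ i, (xs i, xs' i) ∈ S := by
    intro i
    simp only [hxs']
    split_ifs with h1 h2
    · rw [h1, h0]; exact hx
    · rw [h2, hl]; exact hz
    · exact hf _
  have key : ∀ (a : Fin (k + 2)) (b : Fin (k + 1)),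
      |ω (xs a) (ys b)| - ε ≤ |ω' (xs' a) (ys' b)| := by
    intro a b
    have h1 := hd _ (hmem a) _ (hg (ys b))
    have h2 := abs_sub_abs_le_abs_sub (ω (xs a) (ys b)) (ω' (xs' a) (ys' b))
    simp only [hys'] at *
    linarith
  have hstep : ∀ i : Fin (k + 1), chainEnergy ω k xs ys - ε ≤
      min |ω' (xs' i.castSucc) (ys' i)| |ω' (xs' i.succ) (ys' i)| := by
    intro i
    have h1 : chainEnergy ω k xs ys ≤
        min |ω (xs i.castSucc) (ys i)| |ω (xs i.succ) (ys i)| :=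
      ciInf_le (Set.Finite.bddBelow (Set.finite_range _)) i
    have k1 := key i.castSucc i
    have k2 := key i.succ i
    have := min_le_left |ω (xs i.castSucc) (ys i)| |ω (xs i.succ) (ys i)|
    have := min_le_right |ω (xs i.castSucc) (ys i)| |ω (xs i.succ) (ys i)|
    refine le_min ?_ ?_ <;> linarith
  have hE : chainEnergy ω k xs ys - ε ≤ chainEnergy ω' k xs' ys' := le_ciInf hstep
  have hmem' : chainEnergy ω' k xs' ys' ≤ affinity ω' x' z' := by
    refine le_csSup (affinity_set_bddAbove ω' x' z') ⟨k, xs', ys', ?_, ?_, rfl⟩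
    · simp [hxs']
    · have : (Fin.last (k + 1) : Fin (k + 2)) ≠ 0 := by
        simp [Fin.ext_iff]
      simp [hxs', this]
  linarith

/-- The node-affinity graph map respects weak isomorphism. -/
theorem affinity_respects_weakIso {X Y X' Y' : Type u}
    [Finite X] [Finite Y] [Finite X'] [Finite Y']
    [Nonempty X] [Nonempty Y] [Nonempty X'] [Nonempty Y']
    (ω : X → Y → ℝ) (ω' : X' → Y' → ℝ) (h : dH ω ω' = 0) :
    dN (affinity ω) (affinity ω') = 0 := by
  classical
  set SH : Set ℝ := {ε : ℝ | 0 ≤ ε ∧ ∃ S : Set (X × X'), ∃ T : Set (Y × Y'),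
    IsCorr S ∧ IsCorr T ∧ ∀ p ∈ S, ∀ q ∈ T, |ω p.1 q.1 - ω' p.2 q.2| ≤ ε} with hSH
  set SN : Set ℝ := {ε : ℝ | 0 ≤ ε ∧ ∃ R : Set (X × X'), IsCorr R ∧
    ∀ p ∈ R, ∀ q ∈ R, |affinity ω p.1 q.1 - affinity ω' p.2 q.2| ≤ ε} with hSN
  have hInfH : sInf SH = 0 := by
    have : (1/2 : ℝ) * sInf SH = 0 := h
    linarith
  -- SH is nonempty
  have hSHne : SH.Nonempty := by
    refine ⟨⨆ q : (X × Y) × (X' × Y'), |ω q.1.1 q.1.2 - ω' q.2.1 q.2.2|, ?_, univ, univ, ⟨fun a => ⟨Classical.arbitrary _, mem_univ _⟩,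
        fun b => ⟨Classical.arbitrary _, mem_univ _⟩⟩,
      ⟨fun a => ⟨Classical.arbitrary _, mem_univ _⟩,
        fun b => ⟨Classical.arbitrary _, mem_univ _⟩⟩, ?_⟩
    · exact le_trans (abs_nonneg _)
        (le_ciSup (f := fun q : (X × Y) × (X' × Y') => |ω q.1.1 q.1.2 - ω' q.2.1 q.2.2|)
          (Set.Finite.bddAbove (Set.finite_range _))
          ((Classical.arbitrary X, Classical.arbitrary Y),
            (Classical.arbitrary X', Classical.arbitrary Y')))
    · intro p _ q _
      exact le_ciSup (f := fun q : (X × Y) × (X' × Y') => |ω q.1.1 q.1.2 - ω' q.2.1 q.2.2|)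
        (Set.Finite.bddAbove (Set.finite_range _)) ((p.1, q.1), (p.2, q.2))
  have hbddH : BddBelow SH := ⟨0, fun ε hε => hε.1⟩
  have h1 : 0 ≤ sInf SN := Real.sInf_nonneg (fun ε hε => hε.1)
  have h2 : sInf SN ≤ 0 := by
    refine le_of_forall_pos_le_add ?_
    intro ε hε
    have : sInf SH < ε := by rw [hInfH]; exact hε
    obtain ⟨δ, hδ, hδε⟩ := (csInf_lt_iff hbddH hSHne).mp this
    obtain ⟨hδ0, S, T, hS, hT, hd⟩ := hδ
    have hmemN : δ ∈ SN := by
      refine ⟨hδ0, S, hS, ?_⟩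
      intro p hp q hq
      rw [abs_le]
      constructor
      · have : affinity ω' p.2 q.2 ≤ affinity ω p.1 q.1 + δ := by
          refine affinity_le_of_corr ω' ω (S := {r | (r.2, r.1) ∈ S})
            (T := {r | (r.2, r.1) ∈ T}) ⟨fun a => ?_, fun b => ?_⟩ ⟨fun a => ?_, fun b => ?_⟩
            ?_ hp hq
          · obtain ⟨c, hc⟩ := hS.2 a; exact ⟨c, hc⟩
          · obtain ⟨c, hc⟩ := hS.1 b; exact ⟨c, hc⟩
          · obtain ⟨c, hc⟩ := hT.2 a; exact ⟨c, hc⟩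
          · obtain ⟨c, hc⟩ := hT.1 b; exact ⟨c, hc⟩
          · intro r hr s hs
            rw [abs_sub_comm]
            exact hd _ hr _ hs
        linarith
      · have : affinity ω p.1 q.1 ≤ affinity ω' p.2 q.2 + δ :=
          affinity_le_of_corr ω ω' hS hT hd hp hq
        linarith
    calc sInf SN ≤ δ := csInf_le ⟨0, fun x hx => hx.1⟩ hmemN
      _ ≤ 0 + ε := by linarith
  have : sInf SN = 0 := le_antisymm h2 h1
  show (1/2 : ℝ) * sInf SN = 0
  rw [this]; ring
end

section
/- The clique expansion map is 1-Lipschitz: for finite hypernetworks H=(X,Y,ω) and H'=(X',Y',ω'), the networks Q(H)=(X,ω_Q) with ω_Q(x₁,x₂)=max_{y∈Y}|min(ω(x₁,y),ω(x₂,y))| and Q(H') defined analogously satisfy d_N(Q(H),Q(H')) ≤ d_H(H,H'). -/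
open Set

universe u

/-- The clique expansion kernel. -/
noncomputable def cliqueKer {X Y : Type*} (ω : X → Y → ℝ) (x₁ x₂ : X) : ℝ :=
  ⨆ y : Y, |min (ω x₁ y) (ω x₂ y)|

lemma min_lip (a b c d : ℝ) : |min a b - min c d| ≤ max |a - c| |b - d| :=
  abs_min_sub_min_le_max a b c d

lemma key_le {X Y X' Y' : Type u} [Finite Y'] [Nonempty Y']
    (ω : X → Y → ℝ) (ω' : X' → Y' → ℝ)
    (x₁ x₂ : X) (x₁' x₂' : X') (y : Y) (y' : Y') (ε : ℝ)
    (h1 : |ω x₁ y - ω' x₁' y'| ≤ ε) (h2 : |ω x₂ y - ω' x₂' y'| ≤ ε) :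
    |min (ω x₁ y) (ω x₂ y)| ≤ cliqueKer ω' x₁' x₂' + ε := by
  have hb : BddAbove (Set.range fun z : Y' => |min (ω' x₁' z) (ω' x₂' z)|) :=
    Set.Finite.bddAbove (Set.finite_range _)
  have h3 : |min (ω x₁ y) (ω x₂ y) - min (ω' x₁' y') (ω' x₂' y')| ≤ ε :=
    le_trans (min_lip _ _ _ _) (max_le h1 h2)
  have h4 : |min (ω x₁ y) (ω x₂ y)| ≤ |min (ω' x₁' y') (ω' x₂' y')| + ε := by
    have := abs_sub_abs_le_abs_sub (min (ω x₁ y) (ω x₂ y)) (min (ω' x₁' y') (ω' x₂' y'))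
    linarith
  exact h4.trans (add_le_add_left (le_ciSup hb y') ε)

/-- The clique expansion map is 1-Lipschitz. -/
theorem clique_lipschitz {X Y X' Y' : Type u}
    [Finite X] [Finite Y] [Finite X'] [Finite Y']
    [Nonempty X] [Nonempty Y] [Nonempty X'] [Nonempty Y']
    (ω : X → Y → ℝ) (ω' : X' → Y' → ℝ) :
    dN (cliqueKer ω) (cliqueKer ω') ≤ dH ω ω' := by
  unfold dN dH
  apply mul_le_mul_of_nonneg_left _ (by norm_num : (0:ℝ) ≤ 1/2)
  apply csInf_le_csInf
  · exact ⟨0, fun x hx => hx.1⟩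
  · -- the dH set is nonempty
    set f : (X × Y) × (X' × Y') → ℝ := fun q => |ω q.1.1 q.1.2 - ω' q.2.1 q.2.2| with hf
    have hbf : BddAbove (Set.range f) := Set.Finite.bddAbove (Set.finite_range _)
    refine ⟨⨆ q, f q, ?_, Set.univ, Set.univ,
      ⟨fun a => ⟨Classical.arbitrary _, trivial⟩, fun b => ⟨Classical.arbitrary _, trivial⟩⟩,
      ⟨fun a => ⟨Classical.arbitrary _, trivial⟩, fun b => ⟨Classical.arbitrary _, trivial⟩⟩, ?_⟩
    · exact le_trans (abs_nonneg _) (le_ciSup hbf (Classical.arbitrary _))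
    · intro p _ q _
      exact le_ciSup hbf ((p.1, q.1), (p.2, q.2))
  · rintro ε ⟨hε, S, T, hS, hT, hb⟩
    refine ⟨hε, S, hS, ?_⟩
    intro p hp q hq
    rw [abs_sub_le_iff]
    constructor
    · have : cliqueKer ω p.1 q.1 ≤ cliqueKer ω' p.2 q.2 + ε := by
        apply ciSup_le
        intro y
        obtain ⟨y', hy'⟩ := hT.1 y
        exact key_le ω ω' p.1 q.1 p.2 q.2 y y' ε (hb p hp (y, y') hy') (hb q hq (y, y') hy')
      linarith
    · have : cliqueKer ω' p.2 q.2 ≤ cliqueKer ω p.1 q.1 + ε := by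
        apply ciSup_le
        intro y'
        obtain ⟨y, hy⟩ := hT.2 y'
        have h1 : |ω' p.2 y' - ω p.1 y| ≤ ε := by rw [abs_sub_comm]; exact hb p hp (y, y') hy
        have h2 : |ω' q.2 y' - ω q.1 y| ≤ ε := by rw [abs_sub_comm]; exact hb q hq (y, y') hy
        exact key_le ω' ω p.2 q.2 p.1 q.1 y' y ε h1 h2
      linarith
end

section
/- The line graph map is 1-Lipschitz: for finite hypernetworks H=(X,Y,ω) and H'=(X',Y',ω'), the networks L(H)=(Y,ω_L) with ω_L(y₁,y₂)=max_{x∈X}|min(ω(x,y₁),ω(x,y₂))| and L(H') defined analogously satisfy d_N(L(H),L(H')) ≤ d_H(H,H'). -/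
open Set

universe u

/-- The line graph kernel. -/
noncomputable def lineKer {X Y : Type*} (ω : X → Y → ℝ) (y₁ y₂ : Y) : ℝ :=
  ⨆ x : X, |min (ω x y₁) (ω x y₂)|

lemma lineKer_le_aux {X Y X' Y' : Type u} [Finite X] [Nonempty X] [Finite X'] [Nonempty X']
    (ω : X → Y → ℝ) (ω' : X' → Y' → ℝ) (y₁ y₂ : Y) (y₁' y₂' : Y') (ε : ℝ)
    (h : ∀ x : X, ∃ x' : X', |ω x y₁ - ω' x' y₁'| ≤ ε ∧ |ω x y₂ - ω' x' y₂'| ≤ ε) :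
    lineKer ω y₁ y₂ ≤ lineKer ω' y₁' y₂' + ε := by
  apply ciSup_le
  intro x
  obtain ⟨x', h1, h2⟩ := h x
  have hmin : |min (ω x y₁) (ω x y₂) - min (ω' x' y₁') (ω' x' y₂')| ≤ ε :=
    le_trans (abs_min_sub_min_le_max _ _ _ _) (max_le h1 h2)
  have habs : |min (ω x y₁) (ω x y₂)| - |min (ω' x' y₁') (ω' x' y₂')| ≤ ε :=
    le_trans (abs_sub_abs_le_abs_sub _ _) hmin
  have hle : |min (ω' x' y₁') (ω' x' y₂')| ≤ lineKer ω' y₁' y₂' := by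
    unfold lineKer
    exact le_ciSup (Set.Finite.bddAbove
      (Set.finite_range (fun z : X' => |min (ω' z y₁') (ω' z y₂')|))) x'
  linarith

/-- The line graph map is 1-Lipschitz. -/
theorem line_lipschitz {X Y X' Y' : Type u}
    [Finite X] [Finite Y] [Finite X'] [Finite Y']
    [Nonempty X] [Nonempty Y] [Nonempty X'] [Nonempty Y']
    (ω : X → Y → ℝ) (ω' : X' → Y' → ℝ) :
    dN (lineKer ω) (lineKer ω') ≤ dH ω ω' := by
  unfold dN dH
  apply mul_le_mul_of_nonneg_left _ (by norm_num)
  apply csInf_le_csInf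
  · exact ⟨0, fun ε hε => hε.1⟩
  · -- dH set is nonempty
    set f : (X × X') × (Y × Y') → ℝ := fun q => |ω q.1.1 q.2.1 - ω' q.1.2 q.2.2| with hf
    set ε := sSup (Set.range f) with hε
    have hbdd : BddAbove (Set.range f) := Set.Finite.bddAbove (Set.finite_range f)
    have hle : ∀ q, f q ≤ ε := fun q => le_csSup hbdd ⟨q, rfl⟩
    refine ⟨ε, le_trans (abs_nonneg _) (hle (Classical.arbitrary _)), Set.univ, Set.univ,
      ⟨fun a => ⟨Classical.arbitrary _, trivial⟩, fun b => ⟨Classical.arbitrary _, trivial⟩⟩,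
      ⟨fun a => ⟨Classical.arbitrary _, trivial⟩, fun b => ⟨Classical.arbitrary _, trivial⟩⟩,
      fun p _ q _ => hle (p, q)⟩
  · rintro ε ⟨hε0, S, T, hS, hT, hbound⟩
    refine ⟨hε0, T, hT, ?_⟩
    rintro ⟨y₁, y₁'⟩ hp ⟨y₂, y₂'⟩ hq
    rw [abs_sub_le_iff]
    constructor
    · have := lineKer_le_aux ω ω' y₁ y₂ y₁' y₂' ε (fun x => by
        obtain ⟨x', hx'⟩ := hS.1 x
        exact ⟨x', hbound (x, x') hx' (y₁, y₁') hp, hbound (x, x') hx' (y₂, y₂') hq⟩)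
      linarith
    · have := lineKer_le_aux ω' ω y₁' y₂' y₁ y₂ ε (fun x' => by
        obtain ⟨x, hx⟩ := hS.2 x'
        exact ⟨x, by rw [abs_sub_comm]; exact hbound (x, x') hx (y₁, y₁') hp,
          by rw [abs_sub_comm]; exact hbound (x, x') hx (y₂, y₂') hq⟩)
      linarith
end

section
/- Stability of the hypernetwork capacity: for finite hypernetworks H and H', |Cap(H) − Cap(H')| ≤ 2·d_H(H,H'), where Cap(H) = max_{x∈X,y∈Y} ω(x,y). -/
open Set

universe u

/-- The hypernetwork capacity. -/
noncomputable def cap {X Y : Type*} (ω : X → Y → ℝ) : ℝ :=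
  ⨆ x : X, ⨆ y : Y, ω x y


lemma le_cap {X Y : Type*} [Finite X] [Finite Y] [Nonempty X] [Nonempty Y]
    (ω : X → Y → ℝ) (x : X) (y : Y) : ω x y ≤ cap ω := by
  refine le_trans (le_ciSup (Finite.bddAbove_range _) y) ?_
  exact le_ciSup (Finite.bddAbove_range (fun x : X => ⨆ y : Y, ω x y)) x

/-- Stability of the hypernetwork capacity. -/
theorem cap_stability {X Y X' Y' : Type u}
    [Finite X] [Finite Y] [Finite X'] [Finite Y']
    [Nonempty X] [Nonempty Y] [Nonempty X'] [Nonempty Y']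
    (ω : X → Y → ℝ) (ω' : X' → Y' → ℝ) :
    |cap ω - cap ω'| ≤ 2 * dH ω ω' := by
  have h2 : 2 * dH ω ω' = sInf {ε : ℝ | 0 ≤ ε ∧ ∃ S : Set (X × X'), ∃ T : Set (Y × Y'),
      IsCorr S ∧ IsCorr T ∧ ∀ p ∈ S, ∀ q ∈ T, |ω p.1 q.1 - ω' p.2 q.2| ≤ ε} := by
    rw [dH]; ring
  rw [h2]
  have hne : ({ε : ℝ | 0 ≤ ε ∧ ∃ S : Set (X × X'), ∃ T : Set (Y × Y'),
      IsCorr S ∧ IsCorr T ∧ ∀ p ∈ S, ∀ q ∈ T, |ω p.1 q.1 - ω' p.2 q.2| ≤ ε}).Nonempty := by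
    obtain ⟨M, hM⟩ := Finite.exists_le
      (fun z : (X × Y) × (X' × Y') => |ω z.1.1 z.1.2 - ω' z.2.1 z.2.2|)
    refine ⟨max M 0, le_max_right _ _, Set.univ, Set.univ,
      ⟨fun a => ⟨Classical.arbitrary _, trivial⟩, fun b => ⟨Classical.arbitrary _, trivial⟩⟩,
      ⟨fun a => ⟨Classical.arbitrary _, trivial⟩, fun b => ⟨Classical.arbitrary _, trivial⟩⟩,
      fun p _ q _ => le_trans (hM ((p.1, q.1), (p.2, q.2))) (le_max_left _ _)⟩
  refine le_csInf hne ?_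
  rintro ε ⟨hε0, S, T, hS, hT, h⟩
  rw [abs_sub_le_iff]
  constructor
  · rw [sub_le_iff_le_add, cap]
    refine ciSup_le fun x => ciSup_le fun y => ?_
    obtain ⟨x', hx'⟩ := hS.1 x
    obtain ⟨y', hy'⟩ := hT.1 y
    have := h _ hx' _ hy'
    have h2 := le_cap ω' x' y'
    rw [abs_sub_le_iff] at this
    linarith [this.1]
  · rw [sub_le_iff_le_add, cap]
    refine ciSup_le fun x' => ciSup_le fun y' => ?_
    obtain ⟨x, hx⟩ := hS.2 x'
    obtain ⟨y, hy⟩ := hT.2 y'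
    have := h _ hx _ hy
    have h2 := le_cap ω x y
    rw [abs_sub_le_iff] at this
    linarith [this.2]
end

section
/- Stability of the node-circum-radius: for finite hypernetworks H and H', |Rad^n(H) − Rad^n(H')| ≤ 2·d_H(H,H'), where Rad^n(H) = min_{x∈X} max_{y∈Y} ω(x,y). -/
open Set

universe u

/-- The node-circum-radius. -/
noncomputable def radN {X Y : Type*} (ω : X → Y → ℝ) : ℝ :=
  ⨅ x : X, ⨆ y : Y, ω x y

lemma radN_key {X Y X' Y' : Type u}
  [Finite X] [Finite Y] [Finite X'] [Finite Y']
  [Nonempty X] [Nonempty Y] [Nonempty X'] [Nonempty Y']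
  (ω : X → Y → ℝ) (ω' : X' → Y' → ℝ) (ε : ℝ)
  (S : Set (X × X')) (T : Set (Y × Y')) (hS : IsCorr S) (hT : IsCorr T)
  (h : ∀ p ∈ S, ∀ q ∈ T, |ω p.1 q.1 - ω' p.2 q.2| ≤ ε) :
  radN ω ≤ radN ω' + ε := by
  unfold radN
  have hb : ∀ x' : X', BddAbove (Set.range (ω' x')) := fun x' => (Set.finite_range _).bddAbove
  have hb2 : ∀ x : X, BddAbove (Set.range (ω x)) := fun x => (Set.finite_range _).bddAbove
  rw [← sub_le_iff_le_add]
  apply le_ciInf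
  intro x'
  rw [sub_le_iff_le_add]
  obtain ⟨x, hx⟩ := hS.2 x'
  refine le_trans (ciInf_le ((Set.finite_range _).bddBelow) x) ?_
  apply ciSup_le
  intro y
  obtain ⟨y', hy'⟩ := hT.1 y
  have := h (x, x') hx (y, y') hy'
  have h1 : ω x y ≤ ω' x' y' + ε := by
    have := abs_sub_le_iff.mp this
    linarith [this.1]
  refine h1.trans ?_
  have : ω' x' y' ≤ ⨆ y'' : Y', ω' x' y'' := le_ciSup (hb x') y'
  linarith

/-- Stability of the node-circum-radius. -/
theorem radN_stability {X Y X' Y' : Type u}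
    [Finite X] [Finite Y] [Finite X'] [Finite Y']
    [Nonempty X] [Nonempty Y] [Nonempty X'] [Nonempty Y']
    (ω : X → Y → ℝ) (ω' : X' → Y' → ℝ) :
    |radN ω - radN ω'| ≤ 2 * dH ω ω' := by
  have h2 : 2 * dH ω ω' = sInf {ε : ℝ | 0 ≤ ε ∧ ∃ S : Set (X × X'), ∃ T : Set (Y × Y'),
      IsCorr S ∧ IsCorr T ∧ ∀ p ∈ S, ∀ q ∈ T, |ω p.1 q.1 - ω' p.2 q.2| ≤ ε} := by
    unfold dH; ring
  rw [h2]
  -- nonempty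
  set f : (X × X') × (Y × Y') → ℝ := fun p => |ω p.1.1 p.2.1 - ω' p.1.2 p.2.2| with hf
  have hbf : BddAbove (Set.range f) := (Set.finite_range f).bddAbove
  set ε₀ : ℝ := ⨆ p, f p with he
  have hle : ∀ p, f p ≤ ε₀ := fun p => le_ciSup hbf p
  have hε₀ : 0 ≤ ε₀ := le_trans (abs_nonneg _) (hle (Classical.arbitrary _))
  have hne : {ε : ℝ | 0 ≤ ε ∧ ∃ S : Set (X × X'), ∃ T : Set (Y × Y'),
      IsCorr S ∧ IsCorr T ∧ ∀ p ∈ S, ∀ q ∈ T, |ω p.1 q.1 - ω' p.2 q.2| ≤ ε}.Nonempty := by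
    refine ⟨ε₀, hε₀, Set.univ, Set.univ, ⟨fun a => ⟨Classical.arbitrary _, trivial⟩,
      fun b => ⟨Classical.arbitrary _, trivial⟩⟩, ⟨fun a => ⟨Classical.arbitrary _, trivial⟩,
      fun b => ⟨Classical.arbitrary _, trivial⟩⟩, ?_⟩
    intro p _ q _
    exact hle (p, q)
  apply le_csInf hne
  rintro ε ⟨hε, S, T, hS, hT, hd⟩
  rw [abs_sub_le_iff]
  constructor
  · linarith [radN_key ω ω' ε S T hS hT hd]
  · have hS' : IsCorr (Prod.swap '' S) := by
      constructor
      · intro a; obtain ⟨b, hb⟩ := hS.2 a; exact ⟨b, ⟨(b, a), hb, rfl⟩⟩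
      · intro b; obtain ⟨a, ha⟩ := hS.1 b; exact ⟨a, ⟨(b, a), ha, rfl⟩⟩
    have hT' : IsCorr (Prod.swap '' T) := by
      constructor
      · intro a; obtain ⟨b, hb⟩ := hT.2 a; exact ⟨b, ⟨(b, a), hb, rfl⟩⟩
      · intro b; obtain ⟨a, ha⟩ := hT.1 b; exact ⟨a, ⟨(b, a), ha, rfl⟩⟩
    have := radN_key ω' ω ε (Prod.swap '' S) (Prod.swap '' T) hS' hT' ?_
    · linarith
    · rintro p ⟨p', hp', rfl⟩ q ⟨q', hq', rfl⟩
      have := hd p' hp' q' hq'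
      simpa [abs_sub_comm] using this
end

section
/- Stability of the spectrum: for finite hypernetworks H and H', the Hausdorff distance in ℝ between the spectra satisfies d_Haus(Spec(H), Spec(H')) ≤ 2·d_H(H,H'), where Spec(H) = {ω(x,y) : x∈X, y∈Y}. -/
open Set

universe u

/-- The hypernetwork spectrum. -/
def spec {X Y : Type*} (ω : X → Y → ℝ) : Set ℝ :=
  {r : ℝ | ∃ x y, ω x y = r}

/-- Stability of the spectrum with respect to the Hausdorff distance in ℝ. -/
theorem spec_stability {X Y X' Y' : Type u}
    [Finite X] [Finite Y] [Finite X'] [Finite Y']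
    [Nonempty X] [Nonempty Y] [Nonempty X'] [Nonempty Y']
    (ω : X → Y → ℝ) (ω' : X' → Y' → ℝ) :
    Metric.hausdorffDist (spec ω) (spec ω') ≤ 2 * dH ω ω' := by
  have h2 : 2 * dH ω ω' = sInf {ε : ℝ | 0 ≤ ε ∧ ∃ S : Set (X × X'), ∃ T : Set (Y × Y'),
      IsCorr S ∧ IsCorr T ∧ ∀ p ∈ S, ∀ q ∈ T, |ω p.1 q.1 - ω' p.2 q.2| ≤ ε} := by
    unfold dH; ring
  rw [h2]
  obtain ⟨m, hm⟩ := Finite.exists_max (fun p : (X × X') × (Y × Y') =>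
    |ω p.1.1 p.2.1 - ω' p.1.2 p.2.2|)
  have hEne : Set.Nonempty {ε : ℝ | 0 ≤ ε ∧ ∃ S : Set (X × X'), ∃ T : Set (Y × Y'),
      IsCorr S ∧ IsCorr T ∧ ∀ p ∈ S, ∀ q ∈ T, |ω p.1 q.1 - ω' p.2 q.2| ≤ ε} := by
    refine ⟨_, abs_nonneg _, Set.univ, Set.univ,
      ⟨fun a => ⟨Classical.arbitrary _, trivial⟩, fun b => ⟨Classical.arbitrary _, trivial⟩⟩,
      ⟨fun a => ⟨Classical.arbitrary _, trivial⟩, fun b => ⟨Classical.arbitrary _, trivial⟩⟩,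
      fun p _ q _ => hm (p, q)⟩
  apply le_csInf hEne
  rintro ε ⟨hε0, S, T, hS, hT, hbound⟩
  apply Metric.hausdorffDist_le_of_mem_dist hε0
  · rintro r ⟨x, y, rfl⟩
    obtain ⟨x', hx'⟩ := hS.1 x
    obtain ⟨y', hy'⟩ := hT.1 y
    exact ⟨ω' x' y', ⟨x', y', rfl⟩, by simpa [Real.dist_eq] using hbound _ hx' _ hy'⟩
  · rintro r ⟨x', y', rfl⟩
    obtain ⟨x, hx⟩ := hS.2 x'
    obtain ⟨y, hy⟩ := hT.2 y'
    exact ⟨ω x y, ⟨x, y, rfl⟩, by simpa [Real.dist_eq, abs_sub_comm] using hbound _ hx _ hy⟩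
end

section
/- Stability of the node-capacity function: for finite hypernetworks H and H', (1/2)·min over correspondences S∈R(X,X') of max_{(x,x')∈S}|Cap^n_H(x) − Cap^n_{H'}(x')| ≤ d_H(H,H'), where Cap^n_H(x) = max_{y∈Y} ω(x,y). -/
open Set

universe u

/-- The node-capacity function. -/
noncomputable def capN {X Y : Type*} (ω : X → Y → ℝ) (x : X) : ℝ :=
  ⨆ y : Y, ω x y

lemma capN_diff_le {X Y X' Y' : Type u}
    [Finite Y] [Finite Y'] [Nonempty Y] [Nonempty Y']
    (ω : X → Y → ℝ) (ω' : X' → Y' → ℝ) {T : Set (Y × Y')} (hT : IsCorr T)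
    {ε : ℝ} (x : X) (x' : X') (h : ∀ q ∈ T, |ω x q.1 - ω' x' q.2| ≤ ε) :
    |capN ω x - capN ω' x'| ≤ ε := by
  have bdd1 : BddAbove (Set.range (ω x)) := (Set.finite_range _).bddAbove
  have bdd2 : BddAbove (Set.range (ω' x')) := (Set.finite_range _).bddAbove
  unfold capN
  rw [abs_sub_le_iff]
  constructor
  · rw [sub_le_iff_le_add]
    apply ciSup_le
    intro y
    obtain ⟨y', hy'⟩ := hT.1 y
    have h1 := h (y, y') hy'
    have h2 : ω x y ≤ ω' x' y' + ε := by
      have := abs_le.mp h1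
      linarith [this.2]
    have := le_ciSup bdd2 y'; linarith
  · rw [sub_le_iff_le_add]
    apply ciSup_le
    intro y'
    obtain ⟨y, hy⟩ := hT.2 y'
    have h1 := h (y, y') hy
    have h2 : ω' x' y' ≤ ω x y + ε := by
      have := abs_le.mp h1
      linarith [this.1]
    have := le_ciSup bdd1 y; linarith

/-- Stability of the node-capacity function. -/
theorem capN_stability {X Y X' Y' : Type u}
    [Finite X] [Finite Y] [Finite X'] [Finite Y']
    [Nonempty X] [Nonempty Y] [Nonempty X'] [Nonempty Y']
    (ω : X → Y → ℝ) (ω' : X' → Y' → ℝ) :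
    (1/2) * sInf {ε : ℝ | 0 ≤ ε ∧ ∃ S : Set (X × X'), IsCorr S ∧
        ∀ p ∈ S, |capN ω p.1 - capN ω' p.2| ≤ ε} ≤ dH ω ω' := by
  unfold dH
  have half : (0:ℝ) ≤ 1/2 := by norm_num
  apply mul_le_mul_of_nonneg_left _ half
  apply csInf_le_csInf
  · exact ⟨0, fun ε hε => hε.1⟩
  · -- the dH set is nonempty
    set C : ℝ := ⨆ p : (X × X') × (Y × Y'), |ω p.1.1 p.2.1 - ω' p.1.2 p.2.2| with hC
    have bdd : BddAbove (Set.range fun p : (X × X') × (Y × Y') =>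
        |ω p.1.1 p.2.1 - ω' p.1.2 p.2.2|) := (Set.finite_range _).bddAbove
    have hle : ∀ p : (X × X') × (Y × Y'), |ω p.1.1 p.2.1 - ω' p.1.2 p.2.2| ≤ C :=
      fun p => le_ciSup bdd p
    refine ⟨C, ?_, Set.univ, Set.univ, ⟨fun a => ⟨Classical.arbitrary _, trivial⟩,
        fun b => ⟨Classical.arbitrary _, trivial⟩⟩,
        ⟨fun a => ⟨Classical.arbitrary _, trivial⟩,
        fun b => ⟨Classical.arbitrary _, trivial⟩⟩, ?_⟩
    · exact le_trans (abs_nonneg _) (hle ⟨Classical.arbitrary _, Classical.arbitrary _⟩)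
    · intro p _ q _
      exact hle (p, q)
  · rintro ε ⟨hε, S, T, hS, hT, h⟩
    exact ⟨hε, S, hS, fun p hp => capN_diff_le ω ω' hT p.1 p.2 fun q hq => h p hp q hq⟩
end

section
/- Non-negative cross curvature is preserved under hypernetwork Gromov-Hausdorff limits: if Hⁿ=(Xⁿ,Yⁿ,ωⁿ) is a sequence of NNCC hypernetworks converging to H=(X,Y,ω) in d_H, where X is compact metrizable by a metric d such that ω(·,y) is locally Lipschitz with a uniform constant for all y∈Y, then H is an NNCC space. -/
open Set

universe u

/-- Non-negative cross curvature (NNCC) for a hypernetwork cost function. -/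
def NNCC {X Y : Type*} (ω : X → Y → ℝ) : Prop :=
  ∀ x₀ x₁ : X, ∀ yb : Y, ∃ p : ℝ → X, p 0 = x₀ ∧ p 1 = x₁ ∧
    ∀ y : Y, ∀ s ∈ Set.Icc (0:ℝ) 1,
      ω (p s) yb - ω (p s) y ≤
        (1 - s) * (ω x₀ yb - ω x₀ y) + s * (ω x₁ yb - ω x₁ y)

/-- NNCC is preserved under hypernetwork Gromov-Hausdorff limits. -/
theorem nncc_stable_under_limits {X Y : Type u} [MetricSpace X] [CompactSpace X]
    [Nonempty X] [Nonempty Y]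
    (Xn : ℕ → Type u) (Yn : ℕ → Type u) (ωn : ∀ n, Xn n → Yn n → ℝ)
    (ω : X → Y → ℝ)
    (hLip : ∃ K : NNReal, ∀ y : Y, LipschitzWith K fun x => ω x y)
    (hbound : ∃ C : ℝ, ∀ x y, |ω x y| ≤ C)
    (hNNCC : ∀ n, NNCC (ωn n))
    (hconv : ∃ ε : ℕ → ℝ, Filter.Tendsto ε Filter.atTop (nhds 0) ∧
      ∀ n, ∃ S : Set (Xn n × X), ∃ T : Set (Yn n × Y), IsCorr S ∧ IsCorr T ∧
        ∀ p ∈ S, ∀ q ∈ T, |ωn n p.1 q.1 - ω p.2 q.2| ≤ ε n) :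
    NNCC ω := by
  classical
  obtain ⟨K, hK⟩ := hLip
  obtain ⟨ε, hε0, hcorr⟩ := hconv
  intro x₀ x₁ yb
  choose S T hS hT hd using hcorr
  choose a ha using fun n => (hS n).2 x₀
  choose b hb using fun n => (hS n).2 x₁
  choose c hc using fun n => (hT n).2 yb
  choose yl hyl using fun n => (hT n).2
  choose p hp0 hp1 hpath using fun n => hNNCC n (a n) (b n) (c n)
  choose q hq using fun n (s : ℝ) => (hS n).1 (p n s)
  have key : ∀ n, ∀ y : Y, ∀ s ∈ Set.Icc (0:ℝ) 1,
      ω (q n s) yb - ω (q n s) y ≤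
        (1 - s) * (ω x₀ yb - ω x₀ y) + s * (ω x₁ yb - ω x₁ y) + 4 * ε n := by
    intro n y s hs
    have h1 := hd n _ (hq n s) _ (hc n)
    have h2 := hd n _ (hq n s) _ (hyl n y)
    have h3 := hd n _ (ha n) _ (hc n)
    have h4 := hd n _ (ha n) _ (hyl n y)
    have h5 := hd n _ (hb n) _ (hc n)
    have h6 := hd n _ (hb n) _ (hyl n y)
    simp only [abs_le] at h1 h2 h3 h4 h5 h6
    have hpa := hpath n (yl n y) s hs
    have hs0 : (0:ℝ) ≤ s := hs.1
    have hs1 : s ≤ 1 := hs.2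
    have T1 : (1 - s) * (ωn n (a n) (c n) - ωn n (a n) (yl n y)) ≤
        (1 - s) * (ω x₀ yb - ω x₀ y + 2 * ε n) :=
      mul_le_mul_of_nonneg_left (by linarith [h3.1, h3.2, h4.1, h4.2]) (by linarith)
    have T2 : s * (ωn n (b n) (c n) - ωn n (b n) (yl n y)) ≤
        s * (ω x₁ yb - ω x₁ y + 2 * ε n) :=
      mul_le_mul_of_nonneg_left (by linarith [h5.1, h5.2, h6.1, h6.2]) hs0
    nlinarith [h1.1, h1.2, h2.1, h2.2, hpa, T1, T2]
  have hF : ∀ s ∈ Set.Icc (0:ℝ) 1, ∃ x : X, ∀ y : Y,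
      ω x yb - ω x y ≤ (1 - s) * (ω x₀ yb - ω x₀ y) + s * (ω x₁ yb - ω x₁ y) := by
    intro s hs
    obtain ⟨x', -, φ, hφ, hlim⟩ := isCompact_univ.tendsto_subseq
      (fun n => Set.mem_univ (q n s))
    refine ⟨x', fun y => ?_⟩
    have hcont : Filter.Tendsto (fun k => ω (q (φ k) s) yb - ω (q (φ k) s) y)
        Filter.atTop (nhds (ω x' yb - ω x' y)) :=
      (((hK yb).continuous.sub (hK y).continuous).continuousAt.tendsto.comp hlim)
    have hrhs : Filter.Tendsto
        (fun k => (1 - s) * (ω x₀ yb - ω x₀ y) + s * (ω x₁ yb - ω x₁ y) + 4 * ε (φ k))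
        Filter.atTop
        (nhds ((1 - s) * (ω x₀ yb - ω x₀ y) + s * (ω x₁ yb - ω x₁ y))) := by
      have h := ((hε0.comp hφ.tendsto_atTop).const_mul (4:ℝ))
      have := tendsto_const_nhds.add h
        (α := ℕ) (f := fun _ : ℕ => (1 - s) * (ω x₀ yb - ω x₀ y) + s * (ω x₁ yb - ω x₁ y))
      simpa using this
    exact le_of_tendsto_of_tendsto' hcont hrhs (fun k => key (φ k) y s hs)
  refine ⟨fun s => if s = 0 then x₀ else if s = 1 then x₁ else
      if h : s ∈ Set.Icc (0:ℝ) 1 then (hF s h).choose else x₀, by simp, by norm_num, ?_⟩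
  intro y s hs
  rcases eq_or_ne s 0 with rfl | h0
  · simp only [if_pos rfl]
    norm_num
  rcases eq_or_ne s 1 with rfl | h1
  · simp only [if_neg h0, if_pos rfl]
    norm_num
  · simp only [if_neg h0, if_neg h1, dif_pos hs]
    exact (hF s hs).choose_spec y
end
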